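/- arXiv:2512.16942 — 2 statements merged into one kernel-verified Lean document; each statement's English description precedes it below -/
import Mathlib

section
/- Let q be a prime power with q ≡ 1 (mod 4) and let n be the integer with n - 1 = (q-1)/5 (assuming 5 divides q-1). Then C_5 + C_n ≠ F_q; that is, not every element of F_q is the sum of a 5-potent and an n-potent. -/
/-!
Count the pairs in `C₅ × Cₙ`: there are at most `5n = q + 4` of them. Since `4 ∣ q - 1`, the
polynomial `X⁵ - X = X (X⁴ - 1)` splits with distinct roots, so `C₅` has five elements; it is
closed under negation and, as `4 ∣ n - 1`, contained in `Cₙ`. Hence `0 = a + (-a)` has five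
representations and `1 = 1 + 0 = 0 + 1` has two, so if every element were a sum there would be
at least `5 + 2 + (q - 2) = q + 5` pairs.
-/

open Finset Polynomial

section Potents

variable {R : Type*}

lemma pow_mul_add_one_eq_self [Monoid R] {a : R} {k : ℕ} (h : a ^ (k + 1) = a) (j : ℕ) :
    a ^ (j * k + 1) = a := by
  induction j with
  | zero => simp
  | succ j ih => rw [add_mul, one_mul, add_right_comm, pow_add, ih, ← pow_succ', h]

variable [Fintype R] [DecidableEq R]

variable (R) in
def potents [Monoid R] (k : ℕ) : Finset R := {x | x ^ k = x}

@[simp]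
lemma mem_potents [Monoid R] {k : ℕ} {x : R} : x ∈ potents R k ↔ x ^ k = x := by
  simp [potents]

lemma potents_subset_potents [Monoid R] {k m : ℕ} (h : k ∣ m) :
    potents R (k + 1) ⊆ potents R (m + 1) := by
  obtain ⟨j, rfl⟩ := h
  intro x hx
  rw [mem_potents] at hx ⊢
  simpa [mul_comm] using pow_mul_add_one_eq_self hx j

lemma neg_mem_potents [Monoid R] [HasDistribNeg R] {k : ℕ} (hk : Odd k) {x : R}
    (hx : x ∈ potents R k) : -x ∈ potents R k := by
  rw [mem_potents] at hx ⊢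
  rw [hk.neg_pow, hx]

lemma potents_succ_eq_insert_nthRootsFinset [CommRing R] [IsDomain R] {k : ℕ} (hk : k ≠ 0) :
    potents R (k + 1) = insert 0 (nthRootsFinset k (1 : R)) := by
  ext x
  rw [mem_potents, mem_insert, mem_nthRootsFinset (Nat.pos_of_ne_zero hk), pow_succ]
  rcases eq_or_ne x 0 with rfl | hx
  · simp [hk]
  · simp [mul_eq_right₀ hx, hx]

lemma card_potents_le [CommRing R] [IsDomain R] {k : ℕ} (hk : k ≠ 0) :
    #(potents R (k + 1)) ≤ k + 1 := by
  rw [potents_succ_eq_insert_nthRootsFinset hk]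
  refine (card_insert_le _ _).trans (Nat.add_le_add_right ?_ 1)
  rw [nthRootsFinset_def]
  exact (Multiset.toFinset_card_le _).trans (card_nthRoots k 1)

lemma FiniteField.exists_isPrimitiveRoot {F : Type*} [Field F] [Fintype F] {k : ℕ}
    (hk : k ∣ Fintype.card F - 1) (hk0 : k ≠ 0) : ∃ ζ : F, IsPrimitiveRoot ζ k := by
  classical
  rw [← Fintype.card_units] at hk
  obtain ⟨u, hu⟩ : (univ.filter fun u : Fˣ => orderOf u = k).Nonempty := by
    rw [← card_pos, IsCyclic.card_orderOf_eq_totient hk]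
    exact Nat.totient_pos.mpr (Nat.pos_of_ne_zero hk0)
  refine ⟨u, IsPrimitiveRoot.coe_units_iff.mpr ?_⟩
  rw [← (mem_filter.mp hu).2]
  exact IsPrimitiveRoot.orderOf u

lemma card_potents_of_dvd {F : Type*} [Field F] [Fintype F] [DecidableEq F] {k : ℕ}
    (hk : k ∣ Fintype.card F - 1) : #(potents F (k + 1)) = k + 1 := by
  have hk0 : k ≠ 0 := by
    rintro rfl
    have := Fintype.one_lt_card (α := F)
    omega
  obtain ⟨ζ, hζ⟩ := FiniteField.exists_isPrimitiveRoot hk hk0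
  rw [potents_succ_eq_insert_nthRootsFinset hk0,
    card_insert_of_notMem (by simp [mem_nthRootsFinset (Nat.pos_of_ne_zero hk0), hk0]),
    hζ.card_nthRootsFinset]

end Potents

lemma sum_card_fiber_add_card_compl_le {α β : Type*} [Fintype β] [DecidableEq β] {s : Finset α}
    {f : α → β} (hf : ∀ b, ∃ a ∈ s, f a = b) (t : Finset β) :
    ∑ b ∈ t, #{a ∈ s | f a = b} + #tᶜ ≤ #s := by
  rw [card_eq_sum_card_fiberwise (f := f) (s := s) (t := univ) (fun _ _ => mem_univ _),
    ← sum_add_sum_compl t, card_eq_sum_ones tᶜ]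
  gcongr with b
  obtain ⟨a, ha, rfl⟩ := hf b
  exact card_pos.mpr ⟨a, mem_filter.mpr ⟨ha, rfl⟩⟩

section SumRepresentations

variable {R : Type*} [Ring R] [Fintype R] [DecidableEq R] {k m : ℕ}

lemma card_potents_le_card_sum_eq_zero (hk : Odd k) (h : potents R k ⊆ potents R m) :
    #(potents R k) ≤ #{p ∈ potents R k ×ˢ potents R m | p.1 + p.2 = 0} := by
  refine card_le_card_of_injOn (fun a => (a, -a)) (fun a ha => ?_) (fun a _ b _ hab => ?_)
  · simp only [coe_filter, Set.mem_ofPred_eq, mem_product]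
    exact ⟨⟨ha, h (neg_mem_potents hk ha)⟩, add_neg_cancel a⟩
  · exact (Prod.ext_iff.mp hab).1

lemma two_le_card_sum_eq_one [Nontrivial R] (hk : k ≠ 0) (hm : m ≠ 0) :
    2 ≤ #{p ∈ potents R k ×ˢ potents R m | p.1 + p.2 = 1} := by
  have hpair : ({(1, 0), (0, 1)} : Finset (R × R)) ⊆
      {p ∈ potents R k ×ˢ potents R m | p.1 + p.2 = 1} := by
    intro p hp
    rcases mem_insert.mp hp with rfl | hp
    · simp [hm]
    · rw [mem_singleton.mp hp]
      simp [hk]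
  calc 2 = #({(1, 0), (0, 1)} : Finset (R × R)) := (card_pair (by simp)).symm
    _ ≤ _ := card_le_card hpair

end SumRepresentations

theorem not_sum_of_five_potent_and_n_potent_d_eq_five_general
    (q n : ℕ) (hq4 : q % 4 = 1) (h5 : 5 ∣ q - 1)
    (hn : n = (q - 1) / 5 + 1)
    (F : Type*) [Field F] [Fintype F] (hF : Fintype.card F = q) :
    ¬ (∀ γ : F, ∃ a b : F, a ^ 5 = a ∧ b ^ n = b ∧ a + b = γ) := by
  classical
  intro hsurj
  have hsum : ∀ γ : F, ∃ p ∈ potents F 5 ×ˢ potents F n, p.1 + p.2 = γ := fun γ => by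
    obtain ⟨a, b, ha, hb, hab⟩ := hsurj γ
    exact ⟨(a, b), by simp [ha, hb], hab⟩
  have hq : 1 < q := hF ▸ Fintype.one_lt_card
  have hn4 : n = (q - 1) / 20 * 4 + 1 := by omega
  have hcard5 : #(potents F 5) = 5 := card_potents_of_dvd (k := 4) (by rw [hF]; omega)
  have hcardn : #(potents F n) ≤ n := hn4 ▸ card_potents_le (by omega)
  have hsub : potents F 5 ⊆ potents F n :=
    hn4 ▸ potents_subset_potents (k := 4) (dvd_mul_left _ _)
  have hcount := sum_card_fiber_add_card_compl_le hsum {0, 1}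
  rw [sum_pair zero_ne_one, card_compl, card_pair zero_ne_one, card_product, hcard5, hF]
    at hcount
  have h0 := card_potents_le_card_sum_eq_zero (by decide) hsub
  have h1 := two_le_card_sum_eq_one (R := F) (k := 5) (m := n) (by omega) (by omega)
  have := Nat.mul_le_mul_left 5 hcardn
  omega

/-- If `q ≡ 1 (mod 4)` is a prime power, `5 ∣ q - 1`, and `n - 1 = (q-1)/5`, then not every
element of the finite field with `q` elements is the sum of a `5`-potent and an
`n`-potent. -/
theorem not_sum_of_five_potent_and_n_potent_d_eq_five
    (q n : ℕ) (hq : IsPrimePow q) (hq4 : q % 4 = 1) (h5 : 5 ∣ q - 1)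
    (hn : n = (q - 1) / 5 + 1)
    (F : Type*) [Field F] [Fintype F] (hF : Fintype.card F = q) :
    ¬ (∀ γ : F, ∃ a b : F, a ^ 5 = a ∧ b ^ n = b ∧ a + b = γ) :=
  not_sum_of_five_potent_and_n_potent_d_eq_five_general q n hq4 h5 hn F hF
end

section
/- Let m > 2 be an integer, let q be a prime power with (m-1) dividing (q-1), and suppose m divides q-1. Let n be the integer with n - 1 = (q-1)/m. Then C_m is contained in C_n and the union of the translates C_n + α over α ∈ C_m has cardinality at most mn - m = q - 1; in particular C_m + C_n ≠ F_q. -/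
open Finset
open scoped Pointwise

lemma card_filter_pow_succ_eq (F : Type*) [Field F] [Fintype F] [DecidableEq F]
    (d : ℕ) (hd : d ≠ 0) (hdvd : d ∣ Fintype.card F - 1) :
    (univ.filter fun a : F => a ^ (d + 1) = a).card = d + 1 := by
  -- get a primitive d-th root of unity
  obtain ⟨g, hg⟩ := IsCyclic.exists_generator (α := Fˣ)
  have hord : orderOf g = Fintype.card F - 1 := by
    rw [orderOf_eq_card_of_forall_mem_zpowers hg, Nat.card_eq_fintype_card, Fintype.card_units]
  have hdpos : 0 < d := Nat.pos_of_ne_zero hd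
  obtain ⟨k, hk⟩ := hdvd
  have hcpos : 0 < Fintype.card F - 1 := by
    have h1 := Fintype.card_pos (α := Fˣ)
    have h2 : Fintype.card Fˣ = Fintype.card F - 1 := Fintype.card_units F
    omega
  have hk0 : k ≠ 0 := by rintro rfl; omega
  have hkd : orderOf (g ^ k) = d := by
    rw [orderOf_pow_of_dvd hk0 (by rw [hord, hk]; exact dvd_mul_left k d), hord, hk,
      Nat.mul_div_cancel _ (Nat.pos_of_ne_zero hk0)]
  have hζ : IsPrimitiveRoot ((g ^ k : Fˣ) : F) d := by
    have := IsPrimitiveRoot.orderOf ((g ^ k : Fˣ) : F)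
    rwa [orderOf_units, hkd] at this
  have hset : (univ.filter fun a : F => a ^ (d + 1) = a)
      = insert (0 : F) (Polynomial.nthRootsFinset d (1 : F)) := by
    ext a
    simp only [mem_filter, mem_univ, true_and, mem_insert,
      Polynomial.mem_nthRootsFinset hdpos (1 : F)]
    constructor
    · intro h
      rcases eq_or_ne a 0 with rfl | ha
      · exact Or.inl rfl
      · refine Or.inr ?_
        have : a ^ d * a = 1 * a := by rw [one_mul, ← pow_succ]; exact h
        exact mul_right_cancel₀ ha this
    · rintro (rfl | h)
      · simp [hd]
      · rw [pow_succ, h, one_mul]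
  rw [hset, card_insert_of_notMem, hζ.card_nthRootsFinset]
  rw [Polynomial.mem_nthRootsFinset hdpos (1 : F), zero_pow hd]
  exact fun h => one_ne_zero h.symm

/-- Let `m > 2`, `q` a prime power with `(m-1) ∣ (q-1)` and `m ∣ q-1`, and `n - 1 = (q-1)/m`.
Then `C_m ⊆ C_n`, the union of translates `C_n + α` over `α ∈ C_m` has at most
`m·n - m` elements, and in particular `C_m + C_n ≠ F_q`. -/
theorem m_potent_add_n_potent_ne_univ_of_d_eq_m
    (m q n : ℕ) (hm : 2 < m) (hq : IsPrimePow q)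
    (hm1 : (m - 1) ∣ (q - 1)) (hmq : m ∣ q - 1) (hn : n = (q - 1) / m + 1)
    (F : Type*) [Field F] [Fintype F] [DecidableEq F] (hF : Fintype.card F = q) :
    (univ.filter fun a : F => a ^ m = a) ⊆ (univ.filter fun a : F => a ^ n = a) ∧
    ((univ.filter fun a : F => a ^ m = a).biUnion
        (fun α => (univ.filter fun a : F => a ^ n = a).image (· + α))).card ≤ m * n - m ∧
    (univ.filter fun a : F => a ^ m = a) + (univ.filter fun a : F => a ^ n = a) ≠ univ := by
  have hq2 : 2 ≤ q := hq.two_le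
  have hq1 : 0 < q - 1 := by omega
  have hmle : m ≤ q - 1 := Nat.le_of_dvd hq1 hmq
  have hdivpos : 0 < (q - 1) / m := Nat.div_pos hmle (by omega)
  have hn2 : 2 ≤ n := by omega
  -- coprimality: m and m-1 coprime, so m*(m-1) ∣ q-1
  have hcop : Nat.Coprime m (m - 1) := by
    have h : m = (m - 1) + 1 := by omega
    rw [h]
    simp
  have hmul : m * (m - 1) ∣ q - 1 := Nat.Coprime.mul_dvd_of_dvd_of_dvd hcop hmq hm1
  have hdvd_n1 : (m - 1) ∣ (n - 1) := by
    have : n - 1 = (q - 1) / m := by omega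
    rw [this, Nat.dvd_div_iff_mul_dvd hmq]
    exact hmul
  set Cm := univ.filter fun a : F => a ^ m = a with hCm
  set Cn := univ.filter fun a : F => a ^ n = a with hCn
  have h0m : (0 : F) ∈ Cm := by simp [hCm, zero_pow (by omega : m ≠ 0)]
  have h0n : (0 : F) ∈ Cn := by simp [hCn, zero_pow (by omega : n ≠ 0)]
  -- subset
  have hsub : Cm ⊆ Cn := by
    intro a ha
    simp only [hCm, hCn, mem_filter, mem_univ, true_and] at ha ⊢
    rcases eq_or_ne a 0 with rfl | ha0
    · exact zero_pow (by omega : n ≠ 0)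
    · have ham : a ^ (m - 1) = 1 := by
        have : a ^ (m - 1) * a = 1 * a := by
          rw [one_mul, ← pow_succ]
          have : m - 1 + 1 = m := by omega
          rw [this]; exact ha
        exact mul_right_cancel₀ ha0 this
      obtain ⟨t, ht⟩ := hdvd_n1
      have han : a ^ (n - 1) = 1 := by rw [ht, pow_mul, ham, one_pow]
      calc a ^ n = a ^ (n - 1) * a := by
            rw [← pow_succ]; congr 1; omega
        _ = a := by rw [han, one_mul]
  -- cardinalities
  have hcardm : Cm.card = m := by
    have := card_filter_pow_succ_eq F (m - 1) (by omega) (by rw [hF]; exact hm1)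
    have hmm : m - 1 + 1 = m := by omega
    rw [hmm] at this
    exact this
  have hcardn : Cn.card = n := by
    have hdvd : (n - 1) ∣ Fintype.card F - 1 := by
      rw [hF]
      have : n - 1 = (q - 1) / m := by omega
      rw [this]; exact Nat.div_dvd_of_dvd hmq
    have := card_filter_pow_succ_eq F (n - 1) (by omega) hdvd
    have hnn : n - 1 + 1 = n := by omega
    rw [hnn] at this
    exact this
  -- two distinct nonzero elements of Cm
  have hcard_erase : (Cm.erase 0).card = m - 1 := by
    rw [card_erase_of_mem h0m, hcardm]
  obtain ⟨α₀, hα₀, β₀, hβ₀, hαβ⟩ := Finset.one_lt_card.mp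
    (by rw [hcard_erase]; omega : 1 < (Cm.erase 0).card)
  have hα₀0 : α₀ ≠ 0 := (mem_erase.mp hα₀).1
  have hβ₀0 : β₀ ≠ 0 := (mem_erase.mp hβ₀).1
  have hα₀m : α₀ ∈ Cm := (mem_erase.mp hα₀).2
  have hβ₀m : β₀ ∈ Cm := (mem_erase.mp hβ₀).2
  -- the set of redundant pairs
  set P : Finset (F × F) :=
    insert (α₀, β₀) ((Cm.erase 0).image fun α => (α, (0 : F))) with hP
  have hPcard : P.card = m := by
    rw [hP, card_insert_of_notMem, card_image_of_injective _
      (fun a b h => (Prod.mk.injEq _ _ _ _ ▸ h).1), hcard_erase]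
    · omega
    · simp only [mem_image]
      rintro ⟨α, -, h⟩
      exact hβ₀0 ((Prod.mk.injEq _ _ _ _ ▸ h).2).symm
  have hPsub : P ⊆ Cm ×ˢ Cn := by
    intro p hp
    rw [hP, mem_insert] at hp
    rcases hp with rfl | hp
    · exact mem_product.mpr ⟨hα₀m, hsub hβ₀m⟩
    · obtain ⟨α, hα, rfl⟩ := mem_image.mp hp
      exact mem_product.mpr ⟨(mem_erase.mp hα).2, h0n⟩
  -- the union is covered by the non-redundant pairs
  set U := Cm.biUnion (fun α => Cn.image (· + α)) with hU
  have hcover : U ⊆ ((Cm ×ˢ Cn) \ P).image fun p => p.1 + p.2 := by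
    intro x hx
    rw [hU, mem_biUnion] at hx
    obtain ⟨α, hα, hx⟩ := hx
    obtain ⟨c, hc, rfl⟩ := mem_image.mp hx
    by_cases hmem : (α, c) ∈ P
    · rw [hP, mem_insert] at hmem
      rcases hmem with heq | hmem
      · -- (α, c) = (α₀, β₀); use (β₀, α₀) instead
        have hα' : α = α₀ := (Prod.mk.injEq _ _ _ _ ▸ heq).1
        have hc' : c = β₀ := (Prod.mk.injEq _ _ _ _ ▸ heq).2
        refine mem_image.mpr ⟨(β₀, α₀), mem_sdiff.mpr ⟨mem_product.mpr ⟨hβ₀m, hsub hα₀m⟩, ?_⟩,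
          by rw [hα', hc']⟩
        intro hmem'
        rw [hP, mem_insert] at hmem'
        rcases hmem' with h | h
        · exact hαβ ((Prod.mk.injEq _ _ _ _ ▸ h).1).symm
        · obtain ⟨γ, -, h⟩ := mem_image.mp h
          exact hα₀0 ((Prod.mk.injEq _ _ _ _ ▸ h).2).symm
      · -- c = 0 and α ≠ 0; use (0, α) instead
        obtain ⟨γ, hγ, heq⟩ := mem_image.mp hmem
        have hα' : α = γ := (Prod.mk.injEq _ _ _ _ ▸ heq).1.symm
        have hc' : c = 0 := (Prod.mk.injEq _ _ _ _ ▸ heq).2.symm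
        have hαne : α ≠ 0 := hα' ▸ (mem_erase.mp hγ).1
        refine mem_image.mpr ⟨(0, α), mem_sdiff.mpr ⟨mem_product.mpr ⟨h0m, hsub hα⟩, ?_⟩,
          by rw [hc']⟩
        intro hmem'
        rw [hP, mem_insert] at hmem'
        rcases hmem' with h | h
        · exact hα₀0 ((Prod.mk.injEq _ _ _ _ ▸ h).1).symm
        · obtain ⟨δ, hδ, h⟩ := mem_image.mp h
          exact (mem_erase.mp hδ).1 ((Prod.mk.injEq _ _ _ _ ▸ h).1)
    · exact mem_image.mpr ⟨(α, c), mem_sdiff.mpr ⟨mem_product.mpr ⟨hα, hc⟩, hmem⟩, add_comm α c⟩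
  have hUcard : U.card ≤ m * n - m := by
    calc U.card ≤ (((Cm ×ˢ Cn) \ P).image fun p => p.1 + p.2).card := card_le_card hcover
      _ ≤ ((Cm ×ˢ Cn) \ P).card := card_image_le
      _ = (Cm ×ˢ Cn).card - P.card := card_sdiff_of_subset hPsub
      _ = m * n - m := by rw [card_product, hcardm, hcardn, hPcard]
  have hqm : m * n - m = q - 1 := by
    have h1 : m * ((q - 1) / m) = q - 1 := Nat.mul_div_cancel' hmq
    rw [hn, Nat.mul_add, mul_one, Nat.add_sub_cancel, h1]
  refine ⟨hsub, hUcard, ?_⟩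
  intro heq
  have hsum_sub : Cm + Cn ⊆ U := by
    intro x hx
    obtain ⟨a, ha, b, hb, rfl⟩ := Finset.mem_add.mp hx
    exact mem_biUnion.mpr ⟨a, ha, mem_image.mpr ⟨b, hb, add_comm b a⟩⟩
  have : (q : ℕ) ≤ m * n - m := by
    calc q = Fintype.card F := hF.symm
      _ = (univ : Finset F).card := rfl
      _ = (Cm + Cn).card := by rw [heq]
      _ ≤ U.card := card_le_card hsum_sub
      _ ≤ m * n - m := hUcard
  omega
end
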